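/- The function p_β(τ) := −4n τ|τ|^{β−1} + C_β n² τ + C_β τ|τ|^{2(β−1)} is odd, and |p_β(τ)| ≤ λ_β n² n^{1/(β−1)} for every τ ∈ [−n^{1/(β−1)}, n^{1/(β−1)}], where λ_β := 4(β−1)²/(2β−1). -/

import Mathlib

/-!
For `τ ≥ 0` write `x = τ^(β-1)`; then `p_β(τ) = -4nτ^β + C_β n²τ + C_β τ^(2β-1)` has derivative
`C_β(2β-1)x² - 4nβx + C_β n² = 2(βx - n)² + (C_β - 2)n² ≥ 0`, because `C_β(2β-1) = 2β²`.
So `p_β` increases on `[0, ∞)` from `p_β(0) = 0` to its value at `M = n^(1/(β-1))`, which is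
`(2C_β - 4)n²M = λ_β n²M` since `M^(β-1) = n`. Oddness gives the negative half of the interval.
-/

noncomputable section

/-- The auxiliary function `p_β`, with `C_β = 2 + 2(β−1)²/(2β−1)`. -/
def pbeta (β : ℝ) (n : ℕ) (τ : ℝ) : ℝ :=
  -4 * (n : ℝ) * τ * |τ| ^ (β - 1) + (2 + 2 * (β - 1) ^ 2 / (2 * β - 1)) * (n : ℝ) ^ 2 * τ +
    (2 + 2 * (β - 1) ^ 2 / (2 * β - 1)) * τ * |τ| ^ (2 * (β - 1))

open Set

def cBeta (β : ℝ) : ℝ := 2 + 2 * (β - 1) ^ 2 / (2 * β - 1)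

lemma pbeta_def (β : ℝ) (n : ℕ) (τ : ℝ) :
    pbeta β n τ = -4 * n * τ * |τ| ^ (β - 1) + cBeta β * n ^ 2 * τ +
      cBeta β * τ * |τ| ^ (2 * (β - 1)) :=
  rfl

lemma cBeta_mul_two_mul_sub_one {β : ℝ} (hβ : 2 * β - 1 ≠ 0) :
    cBeta β * (2 * β - 1) = 2 * β ^ 2 := by
  rw [cBeta, add_mul, div_mul_cancel₀ _ hβ]
  ring

lemma two_le_cBeta {β : ℝ} (hβ : 1 / 2 < β) : 2 ≤ cBeta β := by
  have : 0 < 2 * β - 1 := by linarith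
  exact le_add_of_nonneg_right (by positivity)

lemma pbeta_zero (β : ℝ) (n : ℕ) : pbeta β n 0 = 0 := by
  simp [pbeta]

lemma pbeta_neg (β : ℝ) (n : ℕ) (τ : ℝ) : pbeta β n (-τ) = -pbeta β n τ := by
  simp only [pbeta, abs_neg]
  ring

lemma abs_pbeta_abs (β : ℝ) (n : ℕ) (τ : ℝ) : |pbeta β n (|τ|)| = |pbeta β n τ| := by
  rcases abs_choice τ with h | h <;> rw [h]
  rw [pbeta_neg, abs_neg]

lemma pbeta_eq_rpow {β : ℝ} (hβ : 1 / 2 < β) (n : ℕ) {t : ℝ} (ht : 0 ≤ t) :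
    pbeta β n t = -4 * n * t ^ β + cBeta β * n ^ 2 * t + cBeta β * t ^ (2 * β - 1) := by
  have hβ' : t ^ β = t ^ (β - 1) * t := by
    simpa using Real.rpow_add_one' ht (y := β - 1) (by linarith)
  have h2β : t ^ (2 * β - 1) = t ^ (2 * (β - 1)) * t := by
    rw [← Real.rpow_add_one' ht (by linarith)]
    ring_nf
  rw [pbeta_def, abs_of_nonneg ht, hβ', h2β]
  ring

lemma hasDerivAt_pbeta_rpow {β : ℝ} (hβ : 1 ≤ β) (N t : ℝ) :
    HasDerivAt (fun t : ℝ => -4 * N * t ^ β + cBeta β * N ^ 2 * t + cBeta β * t ^ (2 * β - 1))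
      (-4 * N * (β * t ^ (β - 1)) + cBeta β * N ^ 2 +
        cBeta β * ((2 * β - 1) * t ^ (2 * (β - 1)))) t := by
  have hpow : HasDerivAt (fun t : ℝ => t ^ (2 * β - 1)) ((2 * β - 1) * t ^ (2 * β - 1 - 1)) t :=
    Real.hasDerivAt_rpow_const (Or.inr (by linarith))
  rw [show 2 * β - 1 - 1 = 2 * (β - 1) by ring] at hpow
  have hsum := (((Real.hasDerivAt_rpow_const (Or.inr hβ)).const_mul (-4 * N)).add
    ((hasDerivAt_id t).const_mul (cBeta β * N ^ 2))).add (hpow.const_mul (cBeta β))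
  rwa [mul_one] at hsum

lemma monotoneOn_pbeta {β : ℝ} (hβ : 1 ≤ β) (n : ℕ) : MonotoneOn (pbeta β n) (Ici 0) := by
  have hC := cBeta_mul_two_mul_sub_one (β := β) (by linarith)
  have h2C := two_le_cBeta (β := β) (by linarith)
  refine MonotoneOn.congr ?_ (fun t ht => (pbeta_eq_rpow (by linarith) n ht).symm)
  refine monotoneOn_of_deriv_nonneg (convex_Ici 0)
    (fun t _ => (hasDerivAt_pbeta_rpow hβ n t).continuousAt.continuousWithinAt)
    (fun t _ => (hasDerivAt_pbeta_rpow hβ n t).differentiableAt.differentiableWithinAt)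
    (fun t ht => ?_)
  rw [interior_Ici] at ht
  have ht : 0 ≤ t := le_of_lt ht
  rw [(hasDerivAt_pbeta_rpow hβ n t).deriv]
  set x := t ^ (β - 1)
  have hx : t ^ (2 * (β - 1)) = x ^ 2 := by
    rw [mul_comm, Real.rpow_mul ht, Real.rpow_two]
  have hsos : -4 * n * (β * x) + cBeta β * n ^ 2 + cBeta β * ((2 * β - 1) * x ^ 2) =
      2 * (β * x - n) ^ 2 + (cBeta β - 2) * n ^ 2 := by
    linear_combination x ^ 2 * hC
  rw [hx, hsos]
  have : 0 ≤ cBeta β - 2 := by linarith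
  positivity

lemma pbeta_of_rpow_eq {β : ℝ} (n : ℕ) {M : ℝ} (hM : 0 ≤ M) (hMn : M ^ (β - 1) = n) :
    pbeta β n M = 4 * (β - 1) ^ 2 / (2 * β - 1) * n ^ 2 * M := by
  have hMn2 : M ^ (2 * (β - 1)) = n ^ 2 := by
    rw [mul_comm, Real.rpow_mul hM, hMn, Real.rpow_two]
  rw [pbeta_def, abs_of_nonneg hM, hMn, hMn2, cBeta]
  ring

theorem statement_8_general (β : ℝ) (hβ : 1 < β) (n : ℕ) :
    (∀ τ : ℝ, pbeta β n (-τ) = -pbeta β n τ) ∧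
    (∀ τ : ℝ, τ ∈ Set.Icc (-((n : ℝ) ^ ((1 : ℝ) / (β - 1)))) ((n : ℝ) ^ ((1 : ℝ) / (β - 1))) →
      |pbeta β n τ| ≤ (4 * (β - 1) ^ 2 / (2 * β - 1)) * (n : ℝ) ^ 2 *
        (n : ℝ) ^ ((1 : ℝ) / (β - 1))) := by
  refine ⟨pbeta_neg β n, fun τ hτ => ?_⟩
  set M := (n : ℝ) ^ ((1 : ℝ) / (β - 1))
  have hM : 0 ≤ M := by positivity
  have hMn : M ^ (β - 1) = n := by
    simpa only [M, one_div] using Real.rpow_inv_rpow (Nat.cast_nonneg n) (by linarith)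
  have hτM : |τ| ≤ M := abs_le.mpr hτ
  have hmono := monotoneOn_pbeta hβ.le n
  have h0 : 0 ≤ pbeta β n |τ| :=
    pbeta_zero β n ▸ hmono self_mem_Ici (abs_nonneg τ) (abs_nonneg τ)
  rw [← abs_pbeta_abs, abs_of_nonneg h0, ← pbeta_of_rpow_eq n hM hMn]
  exact hmono (abs_nonneg τ) hM hτM

/-- `p_β` is odd and `|p_β(τ)| ≤ λ_β n² n^{1/(β−1)}` on
`[−n^{1/(β−1)}, n^{1/(β−1)}]`, where `λ_β = 4(β−1)²/(2β−1)`. -/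
theorem statement_8 (β : ℝ) (hβ : 1 < β) (n : ℕ) (hn : 0 < n) :
    (∀ τ : ℝ, pbeta β n (-τ) = -pbeta β n τ) ∧
    (∀ τ : ℝ, τ ∈ Set.Icc (-((n : ℝ) ^ ((1 : ℝ) / (β - 1)))) ((n : ℝ) ^ ((1 : ℝ) / (β - 1))) →
      |pbeta β n τ| ≤ (4 * (β - 1) ^ 2 / (2 * β - 1)) * (n : ℝ) ^ 2 *
        (n : ℝ) ^ ((1 : ℝ) / (β - 1))) :=
  statement_8_general β hβ n
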